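/- arXiv:2006.14272 — 9 statements merged into one kernel-verified Lean document; each statement's English description precedes it below -/
import Mathlib

section
/- Let H : C → ℝ be a map. Then H is a premium principle on C if and only if there exist a risk measure R : B_b → ℝ and a deviation measure D : C → ℝ such that H(X) = R(X) + D(X) for all X ∈ C. -/
open MeasureTheory

/-- The set of bounded measurable functions `Ω → ℝ`. -/
def Bb (Ω : Type*) [MeasurableSpace Ω] : Set (Ω → ℝ) :=
  {X | Measurable X ∧ ∃ c : ℝ, ∀ ω, |X ω| ≤ c}

/-- `H` is a premium principle on `C`: (P1) cash additivity and
(P2) `H 0 = 0` and nonnegativity on nonnegative claims. -/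
def IsPremium {Ω : Type*} (C : Set (Ω → ℝ)) (H : (Ω → ℝ) → ℝ) : Prop :=
  (∀ X ∈ C, ∀ m : ℝ, H (fun ω => X ω + m) = H X + m) ∧
  H (fun _ => 0) = 0 ∧
  ∀ X ∈ C, (∀ ω, 0 ≤ X ω) → 0 ≤ H X

/-- `R` is a (monetary) risk measure on `B_b`. -/
def IsRisk {Ω : Type*} [MeasurableSpace Ω] (R : (Ω → ℝ) → ℝ) : Prop :=
  (∀ X ∈ Bb Ω, ∀ m : ℝ, R (fun ω => X ω + m) = R X + m) ∧
  R (fun _ => 0) = 0 ∧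
  ∀ X ∈ Bb Ω, ∀ Y ∈ Bb Ω, (∀ ω, X ω ≤ Y ω) → R X ≤ R Y

/-- `D` is a deviation measure on `C`. -/
def IsDeviation {Ω : Type*} (C : Set (Ω → ℝ)) (D : (Ω → ℝ) → ℝ) : Prop :=
  (∀ X ∈ C, ∀ m : ℝ, D (fun ω => X ω + m) = D X) ∧
  D (fun _ => 0) = 0 ∧
  ∀ X ∈ C, 0 ≤ D X

/-- The maximal risk measure `R_Max(X) = inf {H X₀ | X₀ ∈ C, X₀ ≥ X}`. -/
noncomputable def RMax {Ω : Type*} (C : Set (Ω → ℝ)) (H : (Ω → ℝ) → ℝ) (X : Ω → ℝ) : ℝ :=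
  sInf {y | ∃ X₀ ∈ C, (∀ ω, X ω ≤ X₀ ω) ∧ H X₀ = y}

/-- The minimal deviation measure `D_Min = H - R_Max`. -/
noncomputable def DMin {Ω : Type*} (C : Set (Ω → ℝ)) (H : (Ω → ℝ) → ℝ) (X : Ω → ℝ) : ℝ :=
  H X - RMax C H X

/-- A normalized positive linear functional on `B_b` (a finitely additive probability). -/
def IsNPLF {Ω : Type*} [MeasurableSpace Ω] (μ : (Ω → ℝ) → ℝ) : Prop :=
  (∀ X ∈ Bb Ω, ∀ Y ∈ Bb Ω, μ (fun ω => X ω + Y ω) = μ X + μ Y) ∧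
  (∀ X ∈ Bb Ω, ∀ c : ℝ, μ (fun ω => c * X ω) = c * μ X) ∧
  (∀ X ∈ Bb Ω, (∀ ω, 0 ≤ X ω) → 0 ≤ μ X) ∧
  μ (fun _ => 1) = 1

/-- The convex dual `H*(μ) = sup_{X ∈ C} (μ X - H X)`, valued in `EReal`. -/
noncomputable def Hstar {Ω : Type*} (C : Set (Ω → ℝ)) (H : (Ω → ℝ) → ℝ)
    (μ : (Ω → ℝ) → ℝ) : EReal :=
  ⨆ X ∈ C, ((μ X - H X : ℝ) : EReal)

/-- `H` is convex on `C`. -/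
def IsConvexOn {Ω : Type*} (C : Set (Ω → ℝ)) (H : (Ω → ℝ) → ℝ) : Prop :=
  ∀ X ∈ C, ∀ Y ∈ C, ∀ l : ℝ, 0 ≤ l → l ≤ 1 →
    H (fun ω => l * X ω + (1 - l) * Y ω) ≤ l * H X + (1 - l) * H Y

/-
The lower bound `X ↦ ⨅ ω, X ω` is a risk measure, and a premium principle dominates it because
`H X - ⨅ ω, X ω = H (X - ⨅ ω, X ω) ≥ 0`; hence `H - ⨅` is a deviation measure. Conversely, cash
additivity and normalisation pass to a sum `R + D`, and `H X = R X + D X ≥ R 0 = 0` for `X ≥ 0`.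
-/

section

variable {Ω : Type*}

lemma bddBelow_range_of_mem_Bb [MeasurableSpace Ω] {X : Ω → ℝ} (hX : X ∈ Bb Ω) :
    BddBelow (Set.range X) := by
  obtain ⟨-, c, hc⟩ := hX
  exact ⟨-c, by rintro _ ⟨ω, rfl⟩; exact (abs_le.1 (hc ω)).1⟩

lemma isRisk_iInf [MeasurableSpace Ω] [Nonempty Ω] : IsRisk fun X : Ω → ℝ => ⨅ ω, X ω :=
  ⟨fun _ hX m => (ciInf_add (bddBelow_range_of_mem_Bb hX) m).symm, ciInf_const,
    fun _ hX _ _ hXY => ciInf_mono (bddBelow_range_of_mem_Bb hX) hXY⟩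

/-- Shifting the zero claim by `1` leaves it unchanged when `Ω` is empty, against cash additivity. -/
lemma IsPremium.nonempty {C : Set (Ω → ℝ)} {H : (Ω → ℝ) → ℝ} (hP : IsPremium C H)
    (h0C : (fun _ => (0 : ℝ)) ∈ C) : Nonempty Ω := by
  by_contra hΩ
  have hshift₀ : (fun ω : Ω => (0 : ℝ) + 1) = fun _ => 0 := funext fun ω => (hΩ ⟨ω⟩).elim
  have := hP.1 _ h0C 1
  rw [hshift₀, hP.2.1] at this
  norm_num at this

lemma IsPremium.iInf_le [MeasurableSpace Ω] {C : Set (Ω → ℝ)} {H : (Ω → ℝ) → ℝ}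
    (hP : IsPremium C H) (hCB : C ⊆ Bb Ω) (hshift : ∀ X ∈ C, ∀ m : ℝ, (fun ω => X ω + m) ∈ C)
    {X : Ω → ℝ} (hX : X ∈ C) : ⨅ ω, X ω ≤ H X := by
  have hnonneg : ∀ ω, 0 ≤ X ω + -⨅ ω, X ω := fun ω =>
    sub_nonneg.2 (ciInf_le (bddBelow_range_of_mem_Bb (hCB hX)) ω)
  have := hP.2.2 _ (hshift X hX _) hnonneg
  rw [hP.1 X hX] at this
  linarith

lemma IsPremium.isDeviation_sub [MeasurableSpace Ω] {C : Set (Ω → ℝ)} {H R : (Ω → ℝ) → ℝ}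
    (hP : IsPremium C H) (hR : IsRisk R) (hCB : C ⊆ Bb Ω) (hRH : ∀ X ∈ C, R X ≤ H X) :
    IsDeviation C fun X => H X - R X := by
  refine ⟨fun X hX m => ?_, by dsimp only; rw [hP.2.1, hR.2.1, sub_zero],
    fun X hX => sub_nonneg.2 (hRH X hX)⟩
  dsimp only
  rw [hP.1 X hX m, hR.1 X (hCB hX) m]
  ring

lemma isPremium_of_eq_add [MeasurableSpace Ω] {C : Set (Ω → ℝ)} {H R D : (Ω → ℝ) → ℝ}
    (hR : IsRisk R) (hD : IsDeviation C D) (hCB : C ⊆ Bb Ω) (h0C : (fun _ => (0 : ℝ)) ∈ C)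
    (hshift : ∀ X ∈ C, ∀ m : ℝ, (fun ω => X ω + m) ∈ C) (hsum : ∀ X ∈ C, H X = R X + D X) :
    IsPremium C H := by
  refine ⟨fun X hX m => ?_, by rw [hsum _ h0C, hR.2.1, hD.2.1, add_zero], fun X hX hX₀ => ?_⟩
  · rw [hsum _ (hshift X hX m), hR.1 X (hCB hX) m, hD.1 X hX m, hsum X hX]
    ring
  · have hR₀ : R (fun _ => 0) ≤ R X := hR.2.2 _ (hCB h0C) X (hCB hX) hX₀
    rw [hsum X hX]
    linarith [hR.2.1, hD.2.2 X hX]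

end

/-- `H` is a premium principle on `C` iff it is the sum of a risk
measure on `B_b` and a deviation measure on `C`. -/
theorem premium_iff_sum_risk_deviation {Ω : Type*} [MeasurableSpace Ω]
    (C : Set (Ω → ℝ)) (H : (Ω → ℝ) → ℝ)
    (hCB : C ⊆ Bb Ω) (h0C : (fun _ => (0 : ℝ)) ∈ C)
    (hshift : ∀ X ∈ C, ∀ m : ℝ, (fun ω => X ω + m) ∈ C) :
    IsPremium C H ↔
      ∃ R D : (Ω → ℝ) → ℝ, IsRisk R ∧ IsDeviation C D ∧ ∀ X ∈ C, H X = R X + D X := by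
  constructor
  · intro hP
    have := hP.nonempty h0C
    exact ⟨_, _, isRisk_iInf, hP.isDeviation_sub isRisk_iInf hCB fun X => hP.iInf_le hCB hshift,
      fun X _ => (add_sub_cancel _ _).symm⟩
  · rintro ⟨R, D, hR, hD, hsum⟩
    exact isPremium_of_eq_add hR hD hCB h0C hshift hsum
end

section
/- Let H : C → ℝ be a premium principle and define R_Max(X) := inf{H(X₀) : X₀ ∈ C, X₀ ≥ X} for X ∈ B_b. Then: (a) R_Max is a well-defined (real-valued) risk measure on B_b; (b) R_Max(X) ≤ H(X) for all X ∈ C; (c) D_Min(X) := H(X) − R_Max(X) defines a deviation measure on C, so that H(X) = R_Max(X) + D_Min(X) for all X ∈ C; (d) for every other decomposition H(X) = R(X) + D(X) for all X ∈ C with a risk measure R : B_b → ℝ and a deviation measure D : C → ℝ, one has R(X) ≤ R_Max(X) for all X ∈ B_b and D(X) ≥ D_Min(X) for all X ∈ C. -/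
open MeasureTheory

/-
Cash additivity and nonnegativity make a premium principle dominate the essential infimum:
`H X₀ ≥ c` whenever `X₀ ≥ c`. Hence for bounded `X` the premiums of the dominating claims in `C`
form a nonempty (constants lie in `C`) set bounded below, and `R_Max` is a real number. Shifting
`X` by `m` shifts that set by `m`, and enlarging `X` shrinks it, so `R_Max` is a risk measure.
For `X ∈ C` the premium `H X` itself lies in that set, so `R_Max ≤ H` on `C`. Finally any risk
measure `R` with `R ≤ H` on `C` satisfies `R X ≤ R X₀ ≤ H X₀` for every dominating `X₀ ∈ C`,
so `R ≤ R_Max`.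
-/

section MaximalRisk

variable {Ω : Type*} {C : Set (Ω → ℝ)} {H : (Ω → ℝ) → ℝ}

def premiumsAbove (C : Set (Ω → ℝ)) (H : (Ω → ℝ) → ℝ) (X : Ω → ℝ) : Set ℝ :=
  {y | ∃ X₀ ∈ C, (∀ ω, X ω ≤ X₀ ω) ∧ H X₀ = y}

theorem RMax_eq_sInf_premiumsAbove (X : Ω → ℝ) :
    RMax C H X = sInf (premiumsAbove C H X) :=
  rfl

theorem const_mem_of_add_const_mem (h0C : (fun _ => (0 : ℝ)) ∈ C)
    (hshift : ∀ X ∈ C, ∀ m : ℝ, (fun ω => X ω + m) ∈ C) (m : ℝ) : (fun _ => m) ∈ C := by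
  simpa using hshift _ h0C m

theorem IsPremium.le_apply (hH : IsPremium C H)
    (hshift : ∀ X ∈ C, ∀ m : ℝ, (fun ω => X ω + m) ∈ C) {X₀ : Ω → ℝ} (hX₀ : X₀ ∈ C) {c : ℝ}
    (hc : ∀ ω, c ≤ X₀ ω) : c ≤ H X₀ := by
  have h := hH.2.2 _ (hshift X₀ hX₀ (-c)) fun ω => by linarith [hc ω]
  rw [hH.1 X₀ hX₀ (-c)] at h
  linarith

theorem self_mem_premiumsAbove {X : Ω → ℝ} (hX : X ∈ C) : H X ∈ premiumsAbove C H X :=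
  ⟨X, hX, fun _ => le_rfl, rfl⟩

theorem premiumsAbove_nonempty (h0C : (fun _ => (0 : ℝ)) ∈ C)
    (hshift : ∀ X ∈ C, ∀ m : ℝ, (fun ω => X ω + m) ∈ C) {X : Ω → ℝ} {c : ℝ}
    (hc : ∀ ω, X ω ≤ c) : (premiumsAbove C H X).Nonempty :=
  ⟨_, _, const_mem_of_add_const_mem h0C hshift c, hc, rfl⟩

theorem premiumsAbove_bddBelow (hH : IsPremium C H)
    (hshift : ∀ X ∈ C, ∀ m : ℝ, (fun ω => X ω + m) ∈ C) {X : Ω → ℝ} {c : ℝ}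
    (hc : ∀ ω, c ≤ X ω) : BddBelow (premiumsAbove C H X) := by
  refine ⟨c, ?_⟩
  rintro _ ⟨X₀, hX₀, hle, rfl⟩
  exact hH.le_apply hshift hX₀ fun ω => (hc ω).trans (hle ω)

theorem premiumsAbove_mono {X Y : Ω → ℝ} (hXY : ∀ ω, X ω ≤ Y ω) :
    premiumsAbove C H Y ⊆ premiumsAbove C H X := by
  rintro _ ⟨X₀, hX₀, hle, rfl⟩
  exact ⟨X₀, hX₀, fun ω => (hXY ω).trans (hle ω), rfl⟩

theorem premiumsAbove_add_const (hH : IsPremium C H)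
    (hshift : ∀ X ∈ C, ∀ m : ℝ, (fun ω => X ω + m) ∈ C) (X : Ω → ℝ) (m : ℝ) :
    premiumsAbove C H (fun ω => X ω + m) = (· + m) '' premiumsAbove C H X := by
  ext y
  constructor
  · rintro ⟨X₀, hX₀, hle, rfl⟩
    refine ⟨H X₀ - m, ⟨fun ω => X₀ ω + -m, hshift X₀ hX₀ (-m),
      fun ω => by linarith [hle ω], by rw [hH.1 X₀ hX₀]; ring⟩, by ring⟩
  · rintro ⟨_, ⟨X₀, hX₀, hle, rfl⟩, rfl⟩
    exact ⟨fun ω => X₀ ω + m, hshift X₀ hX₀ m, fun ω => by linarith [hle ω], hH.1 X₀ hX₀ m⟩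

theorem RMax_le {X X₀ : Ω → ℝ} (hbdd : BddBelow (premiumsAbove C H X)) (hX₀ : X₀ ∈ C)
    (hle : ∀ ω, X ω ≤ X₀ ω) : RMax C H X ≤ H X₀ :=
  csInf_le hbdd ⟨X₀, hX₀, hle, rfl⟩

theorem le_RMax {X : Ω → ℝ} {a : ℝ} (hne : (premiumsAbove C H X).Nonempty)
    (h : ∀ X₀ ∈ C, (∀ ω, X ω ≤ X₀ ω) → a ≤ H X₀) : a ≤ RMax C H X :=
  le_csInf hne <| by
    rintro _ ⟨X₀, hX₀, hle, rfl⟩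
    exact h X₀ hX₀ hle

theorem RMax_mono {X Y : Ω → ℝ} (hbdd : BddBelow (premiumsAbove C H X))
    (hne : (premiumsAbove C H Y).Nonempty) (hXY : ∀ ω, X ω ≤ Y ω) : RMax C H X ≤ RMax C H Y :=
  csInf_le_csInf hbdd hne (premiumsAbove_mono hXY)

theorem RMax_add_const (hH : IsPremium C H)
    (hshift : ∀ X ∈ C, ∀ m : ℝ, (fun ω => X ω + m) ∈ C) {X : Ω → ℝ}
    (hne : (premiumsAbove C H X).Nonempty) (hbdd : BddBelow (premiumsAbove C H X)) (m : ℝ) :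
    RMax C H (fun ω => X ω + m) = RMax C H X + m := by
  rw [RMax_eq_sInf_premiumsAbove, RMax_eq_sInf_premiumsAbove,
    premiumsAbove_add_const hH hshift X m]
  exact ((OrderIso.addRight m).map_csInf' hne hbdd).symm

theorem RMax_zero (hH : IsPremium C H) (h0C : (fun _ => (0 : ℝ)) ∈ C)
    (hshift : ∀ X ∈ C, ∀ m : ℝ, (fun ω => X ω + m) ∈ C) : RMax C H (fun _ => 0) = 0 :=
  le_antisymm
    ((RMax_le (premiumsAbove_bddBelow hH hshift fun _ => le_rfl) h0C fun _ => le_rfl).trans_eq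
      hH.2.1)
    (le_RMax ⟨_, self_mem_premiumsAbove h0C⟩ fun X₀ hX₀ hle => hH.2.2 X₀ hX₀ hle)

theorem RMax_le_self {X : Ω → ℝ} (hbdd : BddBelow (premiumsAbove C H X)) (hX : X ∈ C) :
    RMax C H X ≤ H X :=
  RMax_le hbdd hX fun _ => le_rfl

variable [MeasurableSpace Ω]

theorem premiumsAbove_nonempty_bddBelow_of_mem_Bb (hH : IsPremium C H)
    (h0C : (fun _ => (0 : ℝ)) ∈ C) (hshift : ∀ X ∈ C, ∀ m : ℝ, (fun ω => X ω + m) ∈ C)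
    {X : Ω → ℝ} (hX : X ∈ Bb Ω) :
    (premiumsAbove C H X).Nonempty ∧ BddBelow (premiumsAbove C H X) := by
  obtain ⟨-, c, hc⟩ := hX
  exact ⟨premiumsAbove_nonempty h0C hshift fun ω => (abs_le.1 (hc ω)).2,
    premiumsAbove_bddBelow hH hshift fun ω => (abs_le.1 (hc ω)).1⟩

theorem isRisk_RMax (hH : IsPremium C H) (h0C : (fun _ => (0 : ℝ)) ∈ C)
    (hshift : ∀ X ∈ C, ∀ m : ℝ, (fun ω => X ω + m) ∈ C) : IsRisk (RMax C H) := by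
  have hwp := fun X (hX : X ∈ Bb Ω) =>
    premiumsAbove_nonempty_bddBelow_of_mem_Bb hH h0C hshift hX
  exact ⟨fun X hX => RMax_add_const hH hshift (hwp X hX).1 (hwp X hX).2,
    RMax_zero hH h0C hshift, fun X hX Y hY => RMax_mono (hwp X hX).2 (hwp Y hY).1⟩

theorem isDeviation_DMin (hH : IsPremium C H) (hCB : C ⊆ Bb Ω) (h0C : (fun _ => (0 : ℝ)) ∈ C)
    (hshift : ∀ X ∈ C, ∀ m : ℝ, (fun ω => X ω + m) ∈ C) : IsDeviation C (DMin C H) := by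
  have hwp := fun X (hX : X ∈ C) =>
    premiumsAbove_nonempty_bddBelow_of_mem_Bb hH h0C hshift (hCB hX)
  refine ⟨fun X hX m => ?_, ?_, fun X hX => sub_nonneg.2 (RMax_le_self (hwp X hX).2 hX)⟩
  · rw [DMin, DMin, hH.1 X hX m, RMax_add_const hH hshift (hwp X hX).1 (hwp X hX).2]
    ring
  · rw [DMin, hH.2.1, RMax_zero hH h0C hshift, sub_zero]

theorem IsRisk.le_RMax {R : (Ω → ℝ) → ℝ} (hR : IsRisk R) (hCB : C ⊆ Bb Ω)
    (hRH : ∀ X ∈ C, R X ≤ H X) {X : Ω → ℝ} (hX : X ∈ Bb Ω)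
    (hne : (premiumsAbove C H X).Nonempty) :
    R X ≤ RMax C H X :=
  _root_.le_RMax hne fun X₀ hX₀ hle => (hR.2.2 X hX X₀ (hCB hX₀) hle).trans (hRH X₀ hX₀)

end MaximalRisk

/-- the maximal decomposition of a premium principle into the
maximal risk measure `R_Max` and the minimal deviation measure `D_Min`. -/
theorem maximal_decomposition {Ω : Type*} [MeasurableSpace Ω]
    (C : Set (Ω → ℝ)) (H : (Ω → ℝ) → ℝ)
    (hCB : C ⊆ Bb Ω) (h0C : (fun _ => (0 : ℝ)) ∈ C)
    (hshift : ∀ X ∈ C, ∀ m : ℝ, (fun ω => X ω + m) ∈ C)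
    (hH : IsPremium C H) :
    -- (a) `R_Max` is a well-defined (real-valued) risk measure on `B_b`
    (∀ X ∈ Bb Ω, ({y | ∃ X₀ ∈ C, (∀ ω, X ω ≤ X₀ ω) ∧ H X₀ = y}).Nonempty ∧
      BddBelow {y | ∃ X₀ ∈ C, (∀ ω, X ω ≤ X₀ ω) ∧ H X₀ = y}) ∧
    IsRisk (RMax C H) ∧
    -- (b) `R_Max ≤ H` on `C`
    (∀ X ∈ C, RMax C H X ≤ H X) ∧
    -- (c) `D_Min` is a deviation measure on `C` and `H = R_Max + D_Min`
    IsDeviation C (DMin C H) ∧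
    (∀ X ∈ C, H X = RMax C H X + DMin C H X) ∧
    -- (d) maximality/minimality of the decomposition
    (∀ R D : (Ω → ℝ) → ℝ, IsRisk R → IsDeviation C D →
      (∀ X ∈ C, H X = R X + D X) →
      (∀ X ∈ Bb Ω, R X ≤ RMax C H X) ∧ (∀ X ∈ C, DMin C H X ≤ D X)) := by
  have hwp := fun X (hX : X ∈ Bb Ω) =>
    premiumsAbove_nonempty_bddBelow_of_mem_Bb hH h0C hshift hX
  refine ⟨hwp, isRisk_RMax hH h0C hshift, fun X hX => RMax_le_self (hwp X (hCB hX)).2 hX,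
    isDeviation_DMin hH hCB h0C hshift, fun X _ => by rw [DMin]; ring, ?_⟩
  intro R D hR hD hdec
  have hRH : ∀ X ∈ C, R X ≤ H X := fun X hX => by linarith [hdec X hX, hD.2.2 X hX]
  have hRle : ∀ X ∈ Bb Ω, R X ≤ RMax C H X := fun X hX => hR.le_RMax hCB hRH hX (hwp X hX).1
  refine ⟨hRle, fun X hX => ?_⟩
  rw [DMin]
  linarith [hRle X (hCB hX), hdec X hX]
end

section
/- Let H : C → ℝ be a premium principle. Then the following are equivalent: (i) H is monotone, i.e. H(X) ≤ H(Y) for all X, Y ∈ C with X ≤ Y pointwise; (ii) H(X) = R_Max(X) for all X ∈ C; (iii) D_Min(X) = 0 for all X ∈ C. -/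
open MeasureTheory

/-!
Taking `X₀ = X` in the infimum gives `R_Max ≤ H` on `C` (the infimum is bounded below because,
by (P1) and (P2), `H X₀ ≥ c` whenever `X₀ ≥ c`); monotonicity of `H` is exactly the reverse
inequality, and `D_Min = 0` is a restatement of `H = R_Max`.
-/

theorem exists_forall_const_le_of_mem_Bb {Ω : Type*} [MeasurableSpace Ω] {X : Ω → ℝ}
    (hX : X ∈ Bb Ω) : ∃ c : ℝ, ∀ ω, c ≤ X ω :=
  let ⟨_, c, hc⟩ := hX
  ⟨-c, fun ω => (abs_le.mp (hc ω)).1⟩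

namespace IsPremium

variable {Ω : Type*} {C : Set (Ω → ℝ)} {H : (Ω → ℝ) → ℝ}

theorem const_le (hH : IsPremium C H)
    (hshift : ∀ X ∈ C, ∀ m : ℝ, (fun ω => X ω + m) ∈ C) {X : Ω → ℝ} (hX : X ∈ C) {c : ℝ}
    (hc : ∀ ω, c ≤ X ω) : c ≤ H X := by
  have h := hH.2.2 _ (hshift X hX (-c)) fun ω => by linarith [hc ω]
  rw [hH.1 X hX] at h
  linarith

theorem bddBelow_premiums_of_const_le (hH : IsPremium C H)
    (hshift : ∀ X ∈ C, ∀ m : ℝ, (fun ω => X ω + m) ∈ C) {X : Ω → ℝ} {c : ℝ}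
    (hc : ∀ ω, c ≤ X ω) : BddBelow {y | ∃ X₀ ∈ C, (∀ ω, X ω ≤ X₀ ω) ∧ H X₀ = y} := by
  refine ⟨c, ?_⟩
  rintro _ ⟨X₀, hX₀, hle, rfl⟩
  exact hH.const_le hshift hX₀ fun ω => (hc ω).trans (hle ω)

theorem RMax_le (hH : IsPremium C H)
    (hshift : ∀ X ∈ C, ∀ m : ℝ, (fun ω => X ω + m) ∈ C) {X Y : Ω → ℝ} {c : ℝ}
    (hc : ∀ ω, c ≤ X ω) (hY : Y ∈ C) (hXY : ∀ ω, X ω ≤ Y ω) : RMax C H X ≤ H Y :=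
  csInf_le (hH.bddBelow_premiums_of_const_le hshift hc) ⟨Y, hY, hXY, rfl⟩

end IsPremium

theorem le_RMax_of_monotone {Ω : Type*} {C : Set (Ω → ℝ)} {H : (Ω → ℝ) → ℝ}
    (hmono : ∀ X ∈ C, ∀ Y ∈ C, (∀ ω, X ω ≤ Y ω) → H X ≤ H Y) {X : Ω → ℝ} (hX : X ∈ C) :
    H X ≤ RMax C H X :=
  le_csInf ⟨H X, X, hX, fun _ => le_rfl, rfl⟩ fun _ ⟨X₀, hX₀, hle, hy⟩ =>
    hy ▸ hmono X hX X₀ hX₀ hle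

theorem monotone_iff_eq_RMax_iff_DMin_zero_general {Ω : Type*} [MeasurableSpace Ω]
    (C : Set (Ω → ℝ)) (H : (Ω → ℝ) → ℝ)
    (hCB : C ⊆ Bb Ω)
    (hshift : ∀ X ∈ C, ∀ m : ℝ, (fun ω => X ω + m) ∈ C)
    (hH : IsPremium C H) :
    ((∀ X ∈ C, ∀ Y ∈ C, (∀ ω, X ω ≤ Y ω) → H X ≤ H Y) ↔
      (∀ X ∈ C, H X = RMax C H X)) ∧
    ((∀ X ∈ C, ∀ Y ∈ C, (∀ ω, X ω ≤ Y ω) → H X ≤ H Y) ↔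
      (∀ X ∈ C, DMin C H X = 0)) := by
  have key : (∀ X ∈ C, ∀ Y ∈ C, (∀ ω, X ω ≤ Y ω) → H X ≤ H Y) ↔
      (∀ X ∈ C, H X = RMax C H X) := by
    constructor
    · intro hmono X hX
      obtain ⟨c, hc⟩ := exists_forall_const_le_of_mem_Bb (hCB hX)
      exact le_antisymm (le_RMax_of_monotone hmono hX)
        (hH.RMax_le hshift hc hX fun _ => le_rfl)
    · intro heq X hX Y hY hXY
      obtain ⟨c, hc⟩ := exists_forall_const_le_of_mem_Bb (hCB hX)
      exact (heq X hX).trans_le (hH.RMax_le hshift hc hY hXY)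
  exact ⟨key, key.trans <| forall₂_congr fun X _ => sub_eq_zero.symm⟩

/-- a premium principle is monotone iff it coincides with its
maximal risk measure on `C`, iff its minimal deviation measure vanishes. -/
theorem monotone_iff_eq_RMax_iff_DMin_zero {Ω : Type*} [MeasurableSpace Ω]
    (C : Set (Ω → ℝ)) (H : (Ω → ℝ) → ℝ)
    (hCB : C ⊆ Bb Ω) (h0C : (fun _ => (0 : ℝ)) ∈ C)
    (hshift : ∀ X ∈ C, ∀ m : ℝ, (fun ω => X ω + m) ∈ C)
    (hH : IsPremium C H) :
    ((∀ X ∈ C, ∀ Y ∈ C, (∀ ω, X ω ≤ Y ω) → H X ≤ H Y) ↔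
      (∀ X ∈ C, H X = RMax C H X)) ∧
    ((∀ X ∈ C, ∀ Y ∈ C, (∀ ω, X ω ≤ Y ω) → H X ≤ H Y) ↔
      (∀ X ∈ C, DMin C H X = 0)) :=
  monotone_iff_eq_RMax_iff_DMin_zero_general C H hCB hshift hH
end

section
/- Let (Ω, 𝓕, P) be a probability space, let 0 ≤ θ ≤ 1/2, and define H(X) := E_P(X) + θ·E_P(|X − E_P(X)|) for every bounded measurable X : Ω → ℝ. Then H(X) ≤ (1 − 2θ)·E_P(X) ≤ 0 for every bounded measurable X with X ≤ 0 pointwise, and H is monotone: H(X) ≤ H(Y) for all bounded measurable X, Y with X ≤ Y pointwise. -/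
open MeasureTheory

/-- The mean absolute deviation premium principle
`H(X) = E_P(X) + θ · E_P(|X − E_P(X)|)`. -/
noncomputable def Hmad {Ω : Type*} [MeasurableSpace Ω] (P : Measure Ω) (θ : ℝ)
    (X : Ω → ℝ) : ℝ :=
  (∫ ω, X ω ∂P) + θ * ∫ ω, |X ω - ∫ ω', X ω' ∂P| ∂P

/-! Everything follows from the pointwise triangle inequality
`|X - a| ≤ |Y - b| + |X - Y| + |a - b|`, integrated. With `Y = 0` it bounds the mean absolute
deviation of `X ≤ 0` by `-2 E X`; for `X ≤ Y` it bounds the growth of the deviation from `Y`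
to `X` by `2 (E Y - E X)`, which the weight `θ ≤ 1/2` keeps below the growth `E Y - E X` of
the mean. -/

section MeanAbsoluteDeviation

variable {Ω : Type*} [MeasurableSpace Ω] {P : Measure Ω}

lemma integrable_of_mem_Bb [IsFiniteMeasure P] {X : Ω → ℝ} (hX : X ∈ Bb Ω) : Integrable X P :=
  let ⟨hmeas, c, hc⟩ := hX
  ⟨hmeas.aestronglyMeasurable, .of_bounded (C := c) (.of_forall hc)⟩

lemma integral_abs_sub_le_integral_abs_sub_add [IsProbabilityMeasure P] {X Y : Ω → ℝ}
    (hX : Integrable X P) (hY : Integrable Y P) (a b : ℝ) :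
    ∫ ω, |X ω - a| ∂P ≤ ∫ ω, |Y ω - b| ∂P + ∫ ω, |X ω - Y ω| ∂P + |a - b| := by
  have hpointwise (ω : Ω) : |X ω - a| ≤ |Y ω - b| + |X ω - Y ω| + |a - b| :=
    calc |X ω - a| = |(Y ω - b) + (X ω - Y ω) + (b - a)| := by congr 1; ring
      _ ≤ |Y ω - b| + |X ω - Y ω| + |b - a| := abs_add_three _ _ _
      _ = |Y ω - b| + |X ω - Y ω| + |a - b| := by rw [abs_sub_comm b a]
  have hYb : Integrable (fun ω => |Y ω - b|) P := (hY.sub (integrable_const b)).abs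
  have hXY : Integrable (fun ω => |X ω - Y ω|) P := (hX.sub hY).abs
  calc ∫ ω, |X ω - a| ∂P
      ≤ ∫ ω, (|Y ω - b| + |X ω - Y ω| + |a - b|) ∂P :=
        integral_mono (hX.sub (integrable_const a)).abs
          ((hYb.add hXY).add (integrable_const _)) hpointwise
    _ = ∫ ω, |Y ω - b| ∂P + ∫ ω, |X ω - Y ω| ∂P + |a - b| := by
        rw [integral_add (f := fun ω => |Y ω - b| + |X ω - Y ω|) (hYb.add hXY)
          (integrable_const _), integral_add hYb hXY, integral_const, probReal_univ, one_smul]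

variable [IsProbabilityMeasure P] {θ : ℝ} {X Y : Ω → ℝ}

lemma Hmad_le_of_nonpos (hθ : 0 ≤ θ) (hX : Integrable X P) (hX0 : ∀ ω, X ω ≤ 0) :
    Hmad P θ X ≤ (1 - 2 * θ) * ∫ ω, X ω ∂P := by
  have hmean : ∫ ω, X ω ∂P ≤ 0 := integral_nonpos hX0
  have habs : ∫ ω, |X ω| ∂P = -∫ ω, X ω ∂P := by
    rw [← integral_neg]
    exact integral_congr_ae (.of_forall fun ω => abs_of_nonpos (hX0 ω))
  have hdev := integral_abs_sub_le_integral_abs_sub_add hX (integrable_zero Ω ℝ P) (∫ ω, X ω ∂P) 0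
  simp only [Pi.zero_apply, sub_zero, habs, abs_of_nonpos hmean,
    integral_const, abs_zero, smul_zero, zero_add] at hdev
  unfold Hmad
  linarith [mul_le_mul_of_nonneg_left hdev hθ]

lemma Hmad_mono (hθ0 : 0 ≤ θ) (hθ1 : θ ≤ 1 / 2) (hX : Integrable X P) (hY : Integrable Y P)
    (hXY : ∀ ω, X ω ≤ Y ω) : Hmad P θ X ≤ Hmad P θ Y := by
  have hmean : ∫ ω, X ω ∂P ≤ ∫ ω, Y ω ∂P := integral_mono hX hY hXY
  have habs : ∫ ω, |X ω - Y ω| ∂P = ∫ ω, Y ω ∂P - ∫ ω, X ω ∂P := by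
    rw [← integral_sub hY hX]
    refine integral_congr_ae (.of_forall fun ω => ?_)
    simp only [abs_sub_comm (X ω), abs_of_nonneg (sub_nonneg.2 (hXY ω))]
  have hdev := integral_abs_sub_le_integral_abs_sub_add hX hY (∫ ω, X ω ∂P) (∫ ω, Y ω ∂P)
  rw [habs, abs_sub_comm, abs_of_nonneg (sub_nonneg.2 hmean)] at hdev
  have hgain : 0 ≤ (1 - 2 * θ) * (∫ ω, Y ω ∂P - ∫ ω, X ω ∂P) :=
    mul_nonneg (by linarith) (sub_nonneg.2 hmean)
  unfold Hmad
  linarith [mul_le_mul_of_nonneg_left hdev hθ0]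

end MeanAbsoluteDeviation

/-- for `0 ≤ θ ≤ 1/2` the mean absolute deviation premium principle
satisfies `H(X) ≤ (1 − 2θ)·E_P(X) ≤ 0` for bounded measurable `X ≤ 0`, and is
monotone on bounded measurable functions. -/
theorem mad_premium_monotone {Ω : Type*} [MeasurableSpace Ω]
    (P : Measure Ω) [IsProbabilityMeasure P] (θ : ℝ) (hθ0 : 0 ≤ θ) (hθ1 : θ ≤ 1 / 2) :
    (∀ X ∈ Bb Ω, (∀ ω, X ω ≤ 0) →
      Hmad P θ X ≤ (1 - 2 * θ) * ∫ ω, X ω ∂P ∧ (1 - 2 * θ) * (∫ ω, X ω ∂P) ≤ 0) ∧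
    (∀ X ∈ Bb Ω, ∀ Y ∈ Bb Ω, (∀ ω, X ω ≤ Y ω) → Hmad P θ X ≤ Hmad P θ Y) :=
  ⟨fun X hX hX0 => ⟨Hmad_le_of_nonpos hθ0 (integrable_of_mem_Bb hX) hX0,
      mul_nonpos_of_nonneg_of_nonpos (by linarith) (integral_nonpos hX0)⟩,
    fun X hX Y hY hXY =>
      Hmad_mono hθ0 hθ1 (integrable_of_mem_Bb hX) (integrable_of_mem_Bb hY) hXY⟩
end

section
/- Let C be a linear subspace of B_b containing the constant functions and let H : C → ℝ be a convex premium principle. For a normalized positive linear functional μ on B_b and X ∈ C, set D_μ(X) := H(X − μ(X)) (where μ(X) is subtracted as a constant function). Then for every X ∈ C, D_Min(X) = min over all normalized positive linear functionals μ with H*(μ) < ∞ of (D_μ(X) + H*(μ)), and this minimum is attained. -/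
/-!
Weak duality: if `H*(μ) < ∞`, then `μ X ≤ μ X₀ ≤ H X₀ + H*(μ)` for every `X₀ ∈ C` dominating `X`,
so `μ X - H*(μ) ≤ R_Max X`, which by cash additivity is `D_Min X ≤ H (X - μ X) + H*(μ)`.

Attainment: `R_Max` is convex, monotone and cash-subadditive on `B_b`. A linear functional `μ`
with `μ Z - μ X ≤ R_Max Z - R_Max X` on `B_b` (a subgradient at `X`, obtained by Hahn–Banach
from the sublinear directional derivative) is therefore positive and normalized, and since
`R_Max ≤ H` on `C` it satisfies `H*(μ) ≤ μ X - R_Max X`, the reverse inequality.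
-/

open MeasureTheory

open Set

section Subgradient

variable {E : Type*} [AddCommGroup E] [Module ℝ E] {φ : E → ℝ}

theorem ConvexOn.div_smul_add_le (hφ : ConvexOn ℝ univ φ) {s t : ℝ} (hs : 0 < s) (ht : 0 < t)
    (y z : E) :
    φ ((s * t / (s + t)) • (y + z)) / (s * t / (s + t)) ≤ φ (s • y) / s + φ (t • z) / t := by
  have hst : 0 < s + t := add_pos hs ht
  have hcomb : (s * t / (s + t)) • (y + z) = (t / (s + t)) • (s • y) + (s / (s + t)) • (t • z) := by
    rw [smul_smul, smul_smul, smul_add]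
    congr 2 <;> field_simp
  have hconv := hφ.2 (mem_univ (s • y)) (mem_univ (t • z)) (by positivity : 0 ≤ t / (s + t))
    (by positivity : 0 ≤ s / (s + t)) (by field_simp; ring)
  rw [← hcomb, smul_eq_mul, smul_eq_mul] at hconv
  rw [div_le_iff₀ (by positivity)]
  calc φ ((s * t / (s + t)) • (y + z))
      ≤ t / (s + t) * φ (s • y) + s / (s + t) * φ (t • z) := hconv
    _ = (φ (s • y) / s + φ (t • z) / t) * (s * t / (s + t)) := by field_simp

/-- For convex `φ` with `φ 0 = 0` the slopes `φ (t • y) / t` decrease as `t ↓ 0`, so this is the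
one-sided derivative of `φ` at `0` in direction `y`. -/
noncomputable def dirDerivAtZero (φ : E → ℝ) (y : E) : ℝ :=
  ⨅ t : Ioi (0 : ℝ), φ ((t : ℝ) • y) / t

theorem ConvexOn.bddBelow_range_div_smul (hφ : ConvexOn ℝ univ φ) (h0 : φ 0 = 0) (y : E) :
    BddBelow (range fun t : Ioi (0 : ℝ) => φ ((t : ℝ) • y) / t) := by
  refine ⟨-φ (-y), ?_⟩
  rintro _ ⟨⟨t, ht⟩, rfl⟩
  have := hφ.div_smul_add_le ht one_pos y (-y)
  simp only [add_neg_cancel, smul_zero, h0, zero_div, one_smul, div_one] at this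
  simp only
  linarith

theorem ConvexOn.dirDerivAtZero_le (hφ : ConvexOn ℝ univ φ) (h0 : φ 0 = 0) {t : ℝ} (ht : 0 < t)
    (y : E) : dirDerivAtZero φ y ≤ φ (t • y) / t :=
  ciInf_le (hφ.bddBelow_range_div_smul h0 y) ⟨t, ht⟩

theorem ConvexOn.dirDerivAtZero_le_self (hφ : ConvexOn ℝ univ φ) (h0 : φ 0 = 0) (y : E) :
    dirDerivAtZero φ y ≤ φ y := by
  simpa using hφ.dirDerivAtZero_le h0 one_pos y

theorem ConvexOn.dirDerivAtZero_add_le (hφ : ConvexOn ℝ univ φ) (h0 : φ 0 = 0) (y z : E) :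
    dirDerivAtZero φ (y + z) ≤ dirDerivAtZero φ y + dirDerivAtZero φ z := by
  have key (s t : Ioi (0 : ℝ)) :
      dirDerivAtZero φ (y + z) ≤ φ ((s : ℝ) • y) / s + φ ((t : ℝ) • z) / t :=
    (hφ.dirDerivAtZero_le h0 (div_pos (mul_pos s.2 t.2) (add_pos s.2 t.2)) _).trans
      (hφ.div_smul_add_le s.2 t.2 y z)
  have (t : Ioi (0 : ℝ)) : dirDerivAtZero φ (y + z) - φ ((t : ℝ) • z) / t ≤ dirDerivAtZero φ y :=
    le_ciInf fun s => by linarith [key s t]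
  have : dirDerivAtZero φ (y + z) - dirDerivAtZero φ y ≤ dirDerivAtZero φ z :=
    le_ciInf fun t => by linarith [this t]
  linarith

theorem ConvexOn.dirDerivAtZero_smul_le (hφ : ConvexOn ℝ univ φ) (h0 : φ 0 = 0) {c : ℝ}
    (hc : 0 < c) (y : E) : dirDerivAtZero φ (c • y) ≤ c * dirDerivAtZero φ y := by
  rw [mul_comm, ← div_le_iff₀ hc]
  refine le_ciInf fun ⟨t, ht⟩ => ?_
  have := hφ.dirDerivAtZero_le h0 (div_pos ht hc) (c • y)
  rw [smul_smul, div_mul_cancel₀ _ hc.ne', div_div_eq_mul_div] at this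
  rw [div_le_iff₀ hc]
  calc dirDerivAtZero φ (c • y) ≤ φ (t • y) * c / t := this
    _ = φ (t • y) / t * c := by ring

theorem ConvexOn.dirDerivAtZero_smul (hφ : ConvexOn ℝ univ φ) (h0 : φ 0 = 0) {c : ℝ}
    (hc : 0 < c) (y : E) : dirDerivAtZero φ (c • y) = c * dirDerivAtZero φ y := by
  refine le_antisymm (hφ.dirDerivAtZero_smul_le h0 hc y) ?_
  have := hφ.dirDerivAtZero_smul_le h0 (inv_pos.2 hc) (c • y)
  rw [smul_smul, inv_mul_cancel₀ hc.ne', one_smul] at this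
  exact (le_inv_mul_iff₀ hc).1 this

theorem ConvexOn.exists_linearMap_le (hφ : ConvexOn ℝ univ φ) (h0 : φ 0 = 0) :
    ∃ g : E →ₗ[ℝ] ℝ, ∀ x, g x ≤ φ x := by
  have hp0 : dirDerivAtZero φ 0 = 0 := by simp [dirDerivAtZero, h0]
  obtain ⟨g, -, hg⟩ := exists_extension_of_le_sublinear ⊥ (dirDerivAtZero φ)
    (fun c hc y => hφ.dirDerivAtZero_smul h0 hc y) (hφ.dirDerivAtZero_add_le h0)
    (fun x => by
      rw [show (⊥ : E →ₗ.[ℝ] ℝ) x = 0 from rfl, (Submodule.mem_bot ℝ).1 x.2, hp0])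
  exact ⟨g, fun x => (hg x).trans (hφ.dirDerivAtZero_le_self h0 x)⟩

theorem ConvexOn.exists_linearMap_le_sub (hφ : ConvexOn ℝ univ φ) (x₀ : E) :
    ∃ g : E →ₗ[ℝ] ℝ, ∀ x, g (x - x₀) ≤ φ x - φ x₀ := by
  have hψ : ConvexOn ℝ univ fun y => φ (x₀ + y) - φ x₀ := by
    have := (hφ.translate_right x₀).add_const (-φ x₀)
    rw [preimage_univ] at this
    exact this.congr fun y _ => (sub_eq_add_neg _ _).symm
  obtain ⟨g, hg⟩ := hψ.exists_linearMap_le (by simp)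
  exact ⟨g, fun x => by simpa using hg (x - x₀)⟩

end Subgradient

namespace Bb

variable {Ω : Type*} [MeasurableSpace Ω]

theorem const_mem (m : ℝ) : (fun _ : Ω => m) ∈ Bb Ω :=
  ⟨measurable_const, |m|, fun _ => le_rfl⟩

theorem add_mem {X Y : Ω → ℝ} (hX : X ∈ Bb Ω) (hY : Y ∈ Bb Ω) : X + Y ∈ Bb Ω := by
  obtain ⟨hmX, cX, hcX⟩ := hX
  obtain ⟨hmY, cY, hcY⟩ := hY
  exact ⟨hmX.add hmY, cX + cY, fun ω => (abs_add_le _ _).trans (add_le_add (hcX ω) (hcY ω))⟩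

theorem smul_mem {X : Ω → ℝ} (hX : X ∈ Bb Ω) (c : ℝ) : c • X ∈ Bb Ω := by
  obtain ⟨hmX, cX, hcX⟩ := hX
  refine ⟨hmX.const_mul c, |c| * cX, fun ω => ?_⟩
  rw [Pi.smul_apply, smul_eq_mul, abs_mul]
  exact mul_le_mul_of_nonneg_left (hcX ω) (abs_nonneg c)

theorem exists_le {X : Ω → ℝ} (hX : X ∈ Bb Ω) : ∃ c, ∀ ω, X ω ≤ c :=
  let ⟨_, c, hc⟩ := hX; ⟨c, fun ω => (abs_le.1 (hc ω)).2⟩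

theorem exists_ge {X : Ω → ℝ} (hX : X ∈ Bb Ω) : ∃ c, ∀ ω, c ≤ X ω :=
  let ⟨_, c, hc⟩ := hX; ⟨-c, fun ω => (abs_le.1 (hc ω)).1⟩

end Bb

def BbSubmodule (Ω : Type*) [MeasurableSpace Ω] : Submodule ℝ (Ω → ℝ) where
  carrier := Bb Ω
  add_mem' := Bb.add_mem
  zero_mem' := Bb.const_mem 0
  smul_mem' c _ hX := Bb.smul_mem hX c

theorem Bb.sub_mem {Ω : Type*} [MeasurableSpace Ω] {X Y : Ω → ℝ} (hX : X ∈ Bb Ω)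
    (hY : Y ∈ Bb Ω) : X - Y ∈ Bb Ω :=
  (BbSubmodule Ω).sub_mem hX hY

section Premium

variable {Ω : Type*} {C : Set (Ω → ℝ)} {H : (Ω → ℝ) → ℝ}

theorem IsPremium.sub_const (hH : IsPremium C H) {X : Ω → ℝ} (hX : X ∈ C) (m : ℝ) :
    H (fun ω => X ω - m) = H X - m := by
  simpa [sub_eq_add_neg] using hH.1 X hX (-m)

theorem IsPremium.le_of_forall_le (hH : IsPremium C H) (hconst : ∀ m : ℝ, (fun _ => m) ∈ C)
    (haddC : ∀ X ∈ C, ∀ Y ∈ C, (fun ω => X ω + Y ω) ∈ C) {X : Ω → ℝ} (hX : X ∈ C) {m : ℝ}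
    (hm : ∀ ω, m ≤ X ω) : m ≤ H X := by
  have h := hH.2.2 _ (haddC X hX _ (hconst (-m))) fun ω => by linarith [hm ω]
  rw [hH.1 X hX] at h
  linarith

theorem coe_sub_le_Hstar {μ : (Ω → ℝ) → ℝ} {X : Ω → ℝ} (hX : X ∈ C) :
    ((μ X - H X : ℝ) : EReal) ≤ Hstar C H μ :=
  le_iSup₂ (f := fun Y (_ : Y ∈ C) => ((μ Y - H Y : ℝ) : EReal)) X hX

theorem Hstar_le_coe_iff {μ : (Ω → ℝ) → ℝ} {b : ℝ} :
    Hstar C H μ ≤ b ↔ ∀ X ∈ C, μ X - H X ≤ b := by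
  simp only [Hstar, iSup₂_le_iff, EReal.coe_le_coe_iff]

end Premium

section RMax

variable {Ω : Type*} [MeasurableSpace Ω] {C : Set (Ω → ℝ)} {H : (Ω → ℝ) → ℝ}

theorem RMax_le_s7 (hH : IsPremium C H) (hconst : ∀ m : ℝ, (fun _ => m) ∈ C)
    (haddC : ∀ X ∈ C, ∀ Y ∈ C, (fun ω => X ω + Y ω) ∈ C) {Y X₀ : Ω → ℝ} (hY : Y ∈ Bb Ω)
    (hX₀ : X₀ ∈ C) (hle : ∀ ω, Y ω ≤ X₀ ω) : RMax C H Y ≤ H X₀ := by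
  obtain ⟨c, hc⟩ := Bb.exists_ge hY
  refine csInf_le ⟨c, ?_⟩ ⟨X₀, hX₀, hle, rfl⟩
  rintro _ ⟨X₁, hX₁, hle₁, rfl⟩
  exact hH.le_of_forall_le hconst haddC hX₁ fun ω => (hc ω).trans (hle₁ ω)

theorem RMax_le_self_s7 (hH : IsPremium C H) (hconst : ∀ m : ℝ, (fun _ => m) ∈ C)
    (haddC : ∀ X ∈ C, ∀ Y ∈ C, (fun ω => X ω + Y ω) ∈ C) {X : Ω → ℝ} (hXB : X ∈ Bb Ω)
    (hX : X ∈ C) : RMax C H X ≤ H X :=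
  RMax_le_s7 hH hconst haddC hXB hX fun _ => le_rfl

theorem le_RMax_s7 (hconst : ∀ m : ℝ, (fun _ => m) ∈ C) {Y : Ω → ℝ} (hY : Y ∈ Bb Ω) {b : ℝ}
    (hb : ∀ X₀ ∈ C, (∀ ω, Y ω ≤ X₀ ω) → b ≤ H X₀) : b ≤ RMax C H Y := by
  obtain ⟨c, hc⟩ := Bb.exists_le hY
  refine le_csInf ⟨H _, _, hconst c, hc, rfl⟩ ?_
  rintro _ ⟨X₀, hX₀, hle, rfl⟩
  exact hb X₀ hX₀ hle

theorem exists_lt_RMax_add (hconst : ∀ m : ℝ, (fun _ => m) ∈ C) {Y : Ω → ℝ} (hY : Y ∈ Bb Ω)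
    {ε : ℝ} (hε : 0 < ε) : ∃ X₀ ∈ C, (∀ ω, Y ω ≤ X₀ ω) ∧ H X₀ < RMax C H Y + ε := by
  by_contra! h
  have := le_RMax_s7 hconst hY h
  linarith

theorem RMax_mono_s7 (hH : IsPremium C H) (hconst : ∀ m : ℝ, (fun _ => m) ∈ C)
    (haddC : ∀ X ∈ C, ∀ Y ∈ C, (fun ω => X ω + Y ω) ∈ C) {Y Z : Ω → ℝ} (hY : Y ∈ Bb Ω)
    (hZ : Z ∈ Bb Ω) (hYZ : ∀ ω, Y ω ≤ Z ω) : RMax C H Y ≤ RMax C H Z :=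
  le_RMax_s7 hconst hZ fun _ hX₀ hle =>
    RMax_le_s7 hH hconst haddC hY hX₀ fun ω => (hYZ ω).trans (hle ω)

theorem RMax_add_const_le (hH : IsPremium C H) (hconst : ∀ m : ℝ, (fun _ => m) ∈ C)
    (haddC : ∀ X ∈ C, ∀ Y ∈ C, (fun ω => X ω + Y ω) ∈ C) {Y : Ω → ℝ} (hY : Y ∈ Bb Ω) (m : ℝ) :
    RMax C H (fun ω => Y ω + m) ≤ RMax C H Y + m := by
  suffices RMax C H (fun ω => Y ω + m) - m ≤ RMax C H Y by linarith
  refine le_RMax_s7 hconst hY fun X₀ hX₀ hle => ?_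
  have := RMax_le_s7 (Y := fun ω => Y ω + m) hH hconst haddC (Bb.add_mem hY (Bb.const_mem m))
    (haddC X₀ hX₀ _ (hconst m)) fun ω => by linarith [hle ω]
  rw [hH.1 X₀ hX₀] at this
  linarith

theorem RMax_convexOn (hH : IsPremium C H) (hconv : IsConvexOn C H)
    (hconst : ∀ m : ℝ, (fun _ => m) ∈ C) (haddC : ∀ X ∈ C, ∀ Y ∈ C, (fun ω => X ω + Y ω) ∈ C)
    (hsmulC : ∀ X ∈ C, ∀ c : ℝ, (fun ω => c * X ω) ∈ C) : ConvexOn ℝ (Bb Ω) (RMax C H) := by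
  refine ⟨(BbSubmodule Ω).convex, fun Y hY Z hZ a b ha hb hab => ?_⟩
  obtain rfl : b = 1 - a := by linarith
  refine le_of_forall_pos_le_add fun ε hε => ?_
  obtain ⟨X₁, hX₁, hle₁, hH₁⟩ := exists_lt_RMax_add (H := H) hconst hY hε
  obtain ⟨X₂, hX₂, hle₂, hH₂⟩ := exists_lt_RMax_add (H := H) hconst hZ hε
  have hle : ∀ ω, (a • Y + (1 - a) • Z) ω ≤ a * X₁ ω + (1 - a) * X₂ ω := fun ω =>
    add_le_add (mul_le_mul_of_nonneg_left (hle₁ ω) ha) (mul_le_mul_of_nonneg_left (hle₂ ω) hb)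
  have hR := RMax_le_s7 hH hconst haddC (Bb.add_mem (Bb.smul_mem hY a) (Bb.smul_mem hZ (1 - a)))
    (haddC _ (hsmulC X₁ hX₁ a) _ (hsmulC X₂ hX₂ (1 - a))) hle
  have hc := hconv X₁ hX₁ X₂ hX₂ a ha (by linarith)
  simp only [smul_eq_mul]
  nlinarith

end RMax

section Duality

variable {Ω : Type*} [MeasurableSpace Ω] {C : Set (Ω → ℝ)} {H : (Ω → ℝ) → ℝ}

theorem IsNPLF.mono {μ : (Ω → ℝ) → ℝ} (hμ : IsNPLF μ) {X Y : Ω → ℝ} (hX : X ∈ Bb Ω)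
    (hY : Y ∈ Bb Ω) (hXY : ∀ ω, X ω ≤ Y ω) : μ X ≤ μ Y := by
  have hadd := hμ.1 X hX _ (Bb.sub_mem hY hX)
  have hpos := hμ.2.2.1 _ (Bb.sub_mem hY hX) fun ω => sub_nonneg.2 (hXY ω)
  simp only [Pi.sub_apply, add_sub_cancel] at hadd
  linarith

theorem isNPLF_of_linearMap (μ : (Ω → ℝ) →ₗ[ℝ] ℝ) (hpos : ∀ X ∈ Bb Ω, (∀ ω, 0 ≤ X ω) → 0 ≤ μ X)
    (hone : μ 1 = 1) : IsNPLF μ :=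
  ⟨fun X _ Y _ => μ.map_add X Y, fun X _ c => μ.map_smul c X, hpos, hone⟩

theorem DMin_le_add_Hstar (hCB : C ⊆ Bb Ω) (hH : IsPremium C H)
    (hconst : ∀ m : ℝ, (fun _ => m) ∈ C) {μ : (Ω → ℝ) → ℝ} (hμ : IsNPLF μ)
    (hμ_top : Hstar C H μ < ⊤) {X : Ω → ℝ} (hX : X ∈ C) :
    ((DMin C H X : ℝ) : EReal) ≤ ((H (fun ω => X ω - μ X) : ℝ) : EReal) + Hstar C H μ := by
  have hμ_bot : Hstar C H μ ≠ ⊥ := ne_bot_of_le_ne_bot (EReal.coe_ne_bot _) (coe_sub_le_Hstar hX)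
  have hb := EReal.coe_toReal hμ_top.ne hμ_bot
  have hbound := Hstar_le_coe_iff.1 hb.ge
  rw [← hb, ← EReal.coe_add, EReal.coe_le_coe_iff, hH.sub_const hX, DMin]
  have : μ X - (Hstar C H μ).toReal ≤ RMax C H X :=
    le_RMax_s7 hconst (hCB hX) fun X₀ hX₀ hle => by
      linarith [hμ.mono (hCB hX) (hCB hX₀) hle, hbound X₀ hX₀]
  linarith

theorem exists_linearMap_sub_le_RMax_sub (hH : IsPremium C H) (hconv : IsConvexOn C H)
    (hconst : ∀ m : ℝ, (fun _ => m) ∈ C) (haddC : ∀ X ∈ C, ∀ Y ∈ C, (fun ω => X ω + Y ω) ∈ C)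
    (hsmulC : ∀ X ∈ C, ∀ c : ℝ, (fun ω => c * X ω) ∈ C) {X : Ω → ℝ} (hX : X ∈ Bb Ω) :
    ∃ μ : (Ω → ℝ) →ₗ[ℝ] ℝ, ∀ Z ∈ Bb Ω, μ Z - μ X ≤ RMax C H Z - RMax C H X := by
  have hφ := (RMax_convexOn hH hconv hconst haddC hsmulC).comp_linearMap (BbSubmodule Ω).subtype
  rw [show ⇑(BbSubmodule Ω).subtype ⁻¹' Bb Ω = univ from eq_univ_of_forall fun Z => Z.2] at hφ
  obtain ⟨g, hg⟩ := hφ.exists_linearMap_le_sub ⟨X, hX⟩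
  obtain ⟨μ, rfl⟩ := LinearMap.exists_extend g
  exact ⟨μ, fun Z hZ => by simpa using hg ⟨Z, hZ⟩⟩

theorem exists_isNPLF_Hstar_le (hCB : C ⊆ Bb Ω) (hH : IsPremium C H) (hconv : IsConvexOn C H)
    (hconst : ∀ m : ℝ, (fun _ => m) ∈ C) (haddC : ∀ X ∈ C, ∀ Y ∈ C, (fun ω => X ω + Y ω) ∈ C)
    (hsmulC : ∀ X ∈ C, ∀ c : ℝ, (fun ω => c * X ω) ∈ C) {X : Ω → ℝ} (hX : X ∈ C) :
    ∃ μ, IsNPLF μ ∧ Hstar C H μ ≤ ((μ X - RMax C H X : ℝ) : EReal) := by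
  have hXB := hCB hX
  obtain ⟨μ, hμ⟩ := exists_linearMap_sub_le_RMax_sub hH hconv hconst haddC hsmulC hXB
  have hpos (W : Ω → ℝ) (hW : W ∈ Bb Ω) (hW0 : ∀ ω, 0 ≤ W ω) : 0 ≤ μ W := by
    have h1 := hμ (X - W) (Bb.sub_mem hXB hW)
    have h2 := RMax_mono_s7 hH hconst haddC (Bb.sub_mem hXB hW) hXB fun ω => sub_le_self _ (hW0 ω)
    rw [map_sub] at h1
    linarith
  have hone : μ 1 = 1 := by
    have h1 := hμ (fun ω => X ω + 1) (Bb.add_mem hXB (Bb.const_mem 1))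
    have h2 := hμ (fun ω => X ω + -1) (Bb.add_mem hXB (Bb.const_mem (-1)))
    have e1 : μ (fun ω => X ω + 1) = μ X + μ 1 := μ.map_add X 1
    have e2 : μ (fun ω => X ω + -1) = μ X - μ 1 :=
      (μ.map_add X (-1)).trans (by simp [sub_eq_add_neg])
    linarith [RMax_add_const_le hH hconst haddC hXB 1, RMax_add_const_le hH hconst haddC hXB (-1)]
  refine ⟨μ, isNPLF_of_linearMap μ hpos hone, Hstar_le_coe_iff.2 fun Y hY => ?_⟩
  linarith [hμ Y (hCB hY), RMax_le_self_s7 hH hconst haddC (hCB hY) hY]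

end Duality

/-- for a convex premium principle,
`D_Min(X) = min_{μ : H*(μ) < ∞} (D_μ(X) + H*(μ))` with
`D_μ(X) = H(X − μ(X))`, the minimum being attained. -/
theorem DMin_dual_representation {Ω : Type*} [MeasurableSpace Ω]
    (C : Set (Ω → ℝ)) (H : (Ω → ℝ) → ℝ)
    (hCB : C ⊆ Bb Ω)
    (hconst : ∀ m : ℝ, (fun _ => m) ∈ C)
    (haddC : ∀ X ∈ C, ∀ Y ∈ C, (fun ω => X ω + Y ω) ∈ C)
    (hsmulC : ∀ X ∈ C, ∀ c : ℝ, (fun ω => c * X ω) ∈ C)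
    (hH : IsPremium C H) (hconv : IsConvexOn C H) :
    ∀ X ∈ C,
      (∃ μ : (Ω → ℝ) → ℝ, IsNPLF μ ∧ Hstar C H μ < ⊤ ∧
        ((DMin C H X : ℝ) : EReal) =
          ((H (fun ω => X ω - μ X) : ℝ) : EReal) + Hstar C H μ) ∧
      (∀ μ : (Ω → ℝ) → ℝ, IsNPLF μ → Hstar C H μ < ⊤ →
        ((DMin C H X : ℝ) : EReal) ≤
          ((H (fun ω => X ω - μ X) : ℝ) : EReal) + Hstar C H μ) := by
  intro X hX
  have hweak (ν : (Ω → ℝ) → ℝ) (hν : IsNPLF ν) (hν_top : Hstar C H ν < ⊤) :=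
    DMin_le_add_Hstar hCB hH hconst hν hν_top hX
  obtain ⟨μ, hμ, hμX⟩ := exists_isNPLF_Hstar_le hCB hH hconv hconst haddC hsmulC hX
  have hμ_top : Hstar C H μ < ⊤ := hμX.trans_lt (EReal.coe_lt_top _)
  refine ⟨⟨μ, hμ, hμ_top, le_antisymm (hweak μ hμ hμ_top) ?_⟩, hweak⟩
  calc ((H (fun ω => X ω - μ X) : ℝ) : EReal) + Hstar C H μ
      ≤ ((H (fun ω => X ω - μ X) : ℝ) : EReal) + ((μ X - RMax C H X : ℝ) : EReal) :=
        add_le_add_right hμX _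
    _ = ((DMin C H X : ℝ) : EReal) := by
        rw [← EReal.coe_add, hH.sub_const hX, DMin]
        congr 1
        ring
end

section
/- Let (Ω, 𝓕, P) be a probability space, θ > 0, and let Q be a probability measure on (Ω, 𝓕) that is absolutely continuous with respect to P with density Z := dQ/dP satisfying ∫ Z² dP < ∞. Then sup over all bounded measurable X : Ω → ℝ of (∫ X dQ − ∫ X dP − (θ/2)·Var_P(X)) equals (1/(2θ))·Var_P(Z), where Var_P(X) := ∫ (X − ∫ X dP)² dP. -/
open MeasureTheory

/-- The variance `Var_P(X) = ∫ (X − ∫ X dP)² dP`. -/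
noncomputable def varP {Ω : Type*} [MeasurableSpace Ω] (P : Measure Ω) (X : Ω → ℝ) : ℝ :=
  ∫ ω, (X ω - ∫ ω', X ω' ∂P) ^ 2 ∂P

/-!
Since `E_P Z = 1`, the premium gap `E_Q X - E_P X` is the covariance `Cov_P(X, Z)`, and
completing the square gives
`Cov_P(X, Z) - (θ/2) Var_P X = (1/(2θ)) (Var_P Z - Var_P (θ X - Z))`.
So every value is at most `Var_P Z / (2θ)`, and this bound is approached by `X = Y / θ` for
bounded `Y` (truncations of `Z`) converging to `Z` in `L²`.
-/

open ProbabilityTheory Filter Topology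
open scoped ENNReal

lemma abs_truncation_sub_self_le {α : Type*} (f : α → ℝ) (A : ℝ) (x : α) :
    |truncation f A x - f x| ≤ |f x| := by
  by_cases hx : f x ∈ Set.Ioc (-A) A <;> simp [truncation, hx]

lemma tendsto_truncation {α : Type*} (f : α → ℝ) (x : α) :
    Tendsto (fun n : ℕ => truncation f n x) atTop (𝓝 (f x)) :=
  tendsto_atTop_of_eventually_const (i₀ := ⌈|f x|⌉₊ + 1) fun _ hn =>
    truncation_eq_self (Nat.lt_of_ceil_lt hn)

section

variable {Ω : Type*} [MeasurableSpace Ω] {P : Measure Ω}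

lemma varP_eq_variance {X : Ω → ℝ} (hX : AEMeasurable X P) : varP P X = Var[X; P] :=
  (variance_eq_integral hX).symm

lemma const_smul_mem_Bb {X : Ω → ℝ} (c : ℝ) (hX : X ∈ Bb Ω) : c • X ∈ Bb Ω := by
  obtain ⟨hXm, C, hC⟩ := hX
  refine ⟨hXm.const_smul c, |c| * C, fun ω => ?_⟩
  rw [Pi.smul_apply, smul_eq_mul, abs_mul]
  exact mul_le_mul_of_nonneg_left (hC ω) (abs_nonneg c)

lemma memLp_of_mem_Bb [IsFiniteMeasure P] {X : Ω → ℝ} (hX : X ∈ Bb Ω) (p : ℝ≥0∞) :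
    MemLp X p P := by
  obtain ⟨hXm, C, hC⟩ := hX
  exact .of_bound hXm.aestronglyMeasurable C (.of_forall hC)

lemma integral_withDensity_ofReal {Z : Ω → ℝ} (hZm : Measurable Z) (hZnn : ∀ᵐ ω ∂P, 0 ≤ Z ω)
    (f : Ω → ℝ) :
    ∫ ω, f ω ∂P.withDensity (fun ω => ENNReal.ofReal (Z ω)) = ∫ ω, Z ω * f ω ∂P := by
  rw [integral_withDensity_eq_integral_toReal_smul hZm.ennreal_ofReal
    (.of_forall fun _ => ENNReal.ofReal_lt_top)]
  refine integral_congr_ae ?_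
  filter_upwards [hZnn] with ω hω
  rw [ENNReal.toReal_ofReal hω, smul_eq_mul]

lemma covariance_eq_integral_withDensity_sub_integral [IsProbabilityMeasure P] {Q : Measure Ω}
    [IsProbabilityMeasure Q] {X Z : Ω → ℝ} (hZm : Measurable Z) (hZnn : ∀ᵐ ω ∂P, 0 ≤ Z ω)
    (hQP : Q = P.withDensity (fun ω => ENNReal.ofReal (Z ω)))
    (hX : MemLp X 2 P) (hZ : MemLp Z 2 P) :
    cov[X, Z; P] = ∫ ω, X ω ∂Q - ∫ ω, X ω ∂P := by
  subst hQP
  have hZ1 : ∫ ω, Z ω ∂P = 1 := by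
    simpa using (integral_withDensity_ofReal hZm hZnn fun _ => (1 : ℝ)).symm
  rw [covariance_eq_sub hX hZ, hZ1, integral_withDensity_ofReal hZm hZnn]
  simp only [Pi.mul_apply, mul_comm, mul_one]

lemma covariance_sub_mul_variance_eq [IsFiniteMeasure P] {X Z : Ω → ℝ} (hX : MemLp X 2 P)
    (hZ : MemLp Z 2 P) {θ : ℝ} (hθ : θ ≠ 0) :
    cov[X, Z; P] - θ / 2 * Var[X; P] = 1 / (2 * θ) * (Var[Z; P] - Var[θ • X - Z; P]) := by
  rw [variance_sub (hX.const_smul θ) hZ, variance_smul, covariance_smul_left]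
  field_simp
  ring

lemma exists_seq_mem_Bb_tendsto_variance_sub [IsProbabilityMeasure P] {Z : Ω → ℝ}
    (hZm : Measurable Z) (hZ2 : Integrable (fun ω => Z ω ^ 2) P) :
    ∃ Y : ℕ → Ω → ℝ, (∀ n, Y n ∈ Bb Ω) ∧ Tendsto (fun n => Var[Y n - Z; P]) atTop (𝓝 0) := by
  have hYm (n : ℕ) : Measurable (truncation Z n) :=
    (measurable_id.indicator measurableSet_Ioc).comp hZm
  refine ⟨fun n => truncation Z n, fun n => ⟨hYm n, _, abs_truncation_le_bound Z n⟩, ?_⟩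
  have hsq : Tendsto (fun n : ℕ => ∫ ω, (truncation Z n ω - Z ω) ^ 2 ∂P) atTop (𝓝 0) := by
    simpa using tendsto_integral_of_dominated_convergence (μ := P) (fun ω => Z ω ^ 2)
      (F := fun (n : ℕ) ω => (truncation Z n ω - Z ω) ^ 2) (f := fun _ => 0)
      (fun n => ((hYm n).sub hZm).pow_const 2 |>.aestronglyMeasurable) hZ2
      (fun n => .of_forall fun ω => by
        rw [Real.norm_eq_abs, abs_pow, ← sq_abs (Z ω)]
        exact pow_le_pow_left₀ (abs_nonneg _) (abs_truncation_sub_self_le Z n ω) 2)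
      (.of_forall fun ω => by
        simpa using ((tendsto_truncation Z ω).sub_const (Z ω)).pow 2)
  exact squeeze_zero (fun n => variance_nonneg _ _)
    (fun n => variance_le_expectation_sq ((hYm n).sub hZm).aestronglyMeasurable) hsq

end

/-- the convex dual of the variance premium principle
`H(X) = E_P(X) + (θ/2)·Var_P(X)` at a probability measure `Q ≪ P` with
square-integrable density `Z = dQ/dP` is `(1/(2θ))·Var_P(Z)`:
`sup_X (E_Q(X) − E_P(X) − (θ/2)Var_P(X)) = (1/(2θ))·Var_P(Z)` over bounded
measurable `X`. -/
theorem variance_principle_dual {Ω : Type*} [MeasurableSpace Ω]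
    (P Q : Measure Ω) [IsProbabilityMeasure P] [IsProbabilityMeasure Q]
    (θ : ℝ) (hθ : 0 < θ)
    (Z : Ω → ℝ) (hZm : Measurable Z) (hZnn : ∀ᵐ ω ∂P, 0 ≤ Z ω)
    (hQP : Q = P.withDensity (fun ω => ENNReal.ofReal (Z ω)))
    (hZ2 : Integrable (fun ω => Z ω ^ 2) P) :
    IsLUB {y : ℝ | ∃ X ∈ Bb Ω,
        y = (∫ ω, X ω ∂Q) - (∫ ω, X ω ∂P) - θ / 2 * varP P X}
      (1 / (2 * θ) * varP P Z) := by
  have hZ : MemLp Z 2 P := (memLp_two_iff_integrable_sq hZm.aestronglyMeasurable).2 hZ2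
  have objective_eq (X : Ω → ℝ) (hX : X ∈ Bb Ω) :
      (∫ ω, X ω ∂Q) - (∫ ω, X ω ∂P) - θ / 2 * varP P X =
        1 / (2 * θ) * (varP P Z - Var[θ • X - Z; P]) := by
    have hX2 := memLp_of_mem_Bb (P := P) hX 2
    rw [← covariance_eq_integral_withDensity_sub_integral hZm hZnn hQP hX2 hZ,
      varP_eq_variance hX2.aemeasurable, varP_eq_variance hZm.aemeasurable,
      covariance_sub_mul_variance_eq hX2 hZ hθ.ne']
  refine ⟨?_, fun b hb => ?_⟩
  · rintro y ⟨X, hX, rfl⟩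
    rw [objective_eq X hX]
    exact mul_le_mul_of_nonneg_left (sub_le_self _ (variance_nonneg _ _)) (by positivity)
  · obtain ⟨Y, hY, hYZ⟩ := exists_seq_mem_Bb_tendsto_variance_sub hZm hZ2
    have hXn (n : ℕ) : θ⁻¹ • Y n ∈ Bb Ω := const_smul_mem_Bb θ⁻¹ (hY n)
    refine le_of_tendsto' (f := fun n => 1 / (2 * θ) * (varP P Z - Var[Y n - Z; P]))
      (by simpa using (hYZ.const_sub (varP P Z)).const_mul (1 / (2 * θ))) fun n => ?_
    have := hb ⟨_, hXn n, rfl⟩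
    rwa [objective_eq _ (hXn n), smul_inv_smul₀ hθ.ne'] at this
end

section
/- Let ν be a probability measure on the positive integers ℕ₊ = {1, 2, 3, …} (with the power-set σ-algebra) such that ∫ X dν ≤ sup_{n ≥ 1} (1/n)·Σ_{k=1}^{n} X(k) for every bounded function X : ℕ₊ → ℝ. Then the sequence of point masses λ_n := ν({n}) is nonincreasing: λ_{n+1} ≤ λ_n for all n ≥ 1. -/
/-! Test the model against `X = 𝟙_{n+1} - 𝟙_{n}`. Every window `{1, …, m}` that contains `n + 1`
also contains `n`, so all Cesàro averages of `X` are nonpositive, while `∫ X dν = λ_{n+1} - λ_n`. -/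

open MeasureTheory

noncomputable instance : MeasurableSpace ℕ+ := ⊤

open Set

theorem sum_indicator_singleton_sub_nonpos {α : Type*} [Preorder α] {s : Finset α}
    (hs : IsLowerSet (s : Set α)) {a b : α} (hab : a ≤ b) :
    ∑ k ∈ s, (({b} : Set α).indicator 1 k - ({a} : Set α).indicator 1 k : ℝ) ≤ 0 := by
  classical
  simp only [Finset.sum_sub_distrib, indicator_apply, mem_singleton_iff, Pi.one_apply,
    Finset.sum_ite_eq', sub_nonpos]
  by_cases hb : b ∈ s
  · have ha : a ∈ s := hs hab hb
    simp [hb, ha]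
  · simp only [hb, if_false]
    split_ifs <;> norm_num

theorem integral_indicator_one_sub_indicator_one {α : Type*} [MeasurableSpace α]
    {μ : Measure α} [IsFiniteMeasure μ] {s t : Set α} (hs : MeasurableSet s)
    (ht : MeasurableSet t) :
    ∫ x, (s.indicator 1 x - t.indicator 1 x : ℝ) ∂μ = μ.real s - μ.real t := by
  rw [integral_sub ((integrable_const 1).indicator hs) ((integrable_const 1).indicator ht),
    integral_indicator_one hs, integral_indicator_one ht]

theorem abs_indicator_one_sub_indicator_one_le {α : Type*} (s t : Set α) (x : α) :
    |(s.indicator 1 x - t.indicator 1 x : ℝ)| ≤ 1 := by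
  by_cases hs : x ∈ s <;> by_cases ht : x ∈ t <;> simp [hs, ht]

theorem PNat.isLowerSet_Icc_one (m : ℕ+) : IsLowerSet (Finset.Icc 1 m : Set ℕ+) :=
  fun _ _ hkj hj => Finset.mem_Icc.2 ⟨one_le, hkj.trans (Finset.mem_Icc.1 hj).2⟩

/-- if a probability measure `ν` on `ℕ₊` satisfies
`∫ X dν ≤ sup_n (1/n)·Σ_{k=1}^n X(k)` for every bounded `X`, then its point
masses `λ_n = ν {n}` are nonincreasing. -/
theorem plausible_model_nonincreasing (ν : Measure ℕ+) [IsProbabilityMeasure ν]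
    (h : ∀ X : ℕ+ → ℝ, (∃ c : ℝ, ∀ n, |X n| ≤ c) →
      (∫ n, X n ∂ν) ≤ ⨆ n : ℕ+, (1 / (n : ℝ)) * ∑ k ∈ Finset.Icc 1 n, X k) :
    ∀ n : ℕ+, ν {n + 1} ≤ ν {n} := by
  intro n
  set X : ℕ+ → ℝ := fun k => ({n + 1} : Set ℕ+).indicator 1 k - ({n} : Set ℕ+).indicator 1 k
  have hmodel := h X ⟨1, abs_indicator_one_sub_indicator_one_le _ _⟩
  have hintegral : ∫ k, X k ∂ν = ν.real {n + 1} - ν.real {n} :=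
    integral_indicator_one_sub_indicator_one .of_discrete .of_discrete
  have hCesaro : (⨆ m : ℕ+, (1 / (m : ℝ)) * ∑ k ∈ Finset.Icc 1 m, X k) ≤ 0 :=
    ciSup_le fun m => mul_nonpos_of_nonneg_of_nonpos (by positivity)
      (sum_indicator_singleton_sub_nonpos (PNat.isLowerSet_Icc_one m) (PNat.lt_add_right n 1).le)
  rw [← ENNReal.toReal_le_toReal (measure_ne_top ν _) (measure_ne_top ν _)]
  exact sub_nonpos.1 (hintegral ▸ hmodel.trans hCesaro)
end

section
/- There exists no probability measure ν on the positive integers ℕ₊ = {1, 2, 3, …} (with the power-set σ-algebra) such that both (a) ∫ X dν ≤ sup_{m ≥ 1} (1/m)·Σ_{k=1}^{m} X(k) for every bounded X : ℕ₊ → ℝ, and (b) for every n ≥ 1, 2·∫ X dν − (1/n)·Σ_{k=1}^{n} X(k) ≤ sup_{m ≥ 1} (1/m)·Σ_{k=1}^{m} X(k) for every bounded X : ℕ₊ → ℝ. -/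
/-!
If `ν` were a center, then testing (b) against the indicator `X` of `{1, …, N}` gives
`2 ν{1, …, N} - min(n, N)/n ≤ sup_m min(m, N)/m = 1` for every `n`; letting `n → ∞` yields
`ν{1, …, N} ≤ 1/2` for every `N`, which is impossible since `ν{1, …, N} → 1`.
-/

open MeasureTheory

open Filter Topology Set

noncomputable def cesaroAverage (X : ℕ+ → ℝ) (m : ℕ+) : ℝ :=
  (1 / (m : ℝ)) * ∑ k ∈ Finset.Icc 1 m, X k

lemma cesaroAverage_le {X : ℕ+ → ℝ} {c : ℝ} (hX : ∀ k, X k ≤ c) (m : ℕ+) :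
    cesaroAverage X m ≤ c := by
  have hm : (0 : ℝ) < m := by exact_mod_cast m.pos
  rw [cesaroAverage, one_div, inv_mul_le_iff₀ hm]
  calc ∑ k ∈ Finset.Icc 1 m, X k ≤ ∑ _k ∈ Finset.Icc 1 m, c := Finset.sum_le_sum fun k _ => hX k
    _ = m * c := by simp

lemma iSup_cesaroAverage_le {X : ℕ+ → ℝ} {c : ℝ} (hX : ∀ k, X k ≤ c) :
    ⨆ m, cesaroAverage X m ≤ c :=
  ciSup_le (cesaroAverage_le hX)

lemma sum_Icc_eq_of_eq_zero_of_lt {X : ℕ+ → ℝ} {N m : ℕ+} (hX : ∀ k, N < k → X k = 0)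
    (hNm : N ≤ m) : ∑ k ∈ Finset.Icc 1 m, X k = ∑ k ∈ Finset.Icc 1 N, X k := by
  refine (Finset.sum_subset (Finset.Icc_subset_Icc_right hNm) fun k hkm hkN => hX k ?_).symm
  simp only [Finset.mem_Icc, not_and, not_le] at hkm hkN
  exact hkN hkm.1

lemma tendsto_cesaroAverage_zero_of_eq_zero_of_lt {X : ℕ+ → ℝ} {N : ℕ+}
    (hX : ∀ k, N < k → X k = 0) : Tendsto (cesaroAverage X) atTop (𝓝 0) := by
  have hlim : Tendsto (fun m : ℕ+ => (∑ k ∈ Finset.Icc 1 N, X k) / (m : ℝ)) atTop (𝓝 0) :=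
    (tendsto_const_div_atTop_nhds_zero_nat _).comp tendsto_PNat_val_atTop_atTop
  refine hlim.congr' (eventually_atTop.2 ⟨N, fun m hm => ?_⟩)
  rw [cesaroAverage, sum_Icc_eq_of_eq_zero_of_lt hX hm, one_div_mul_eq_div]

lemma tendsto_measureReal_Iic_atTop {α : Type*} [Preorder α] [MeasurableSpace α]
    [(atTop : Filter α).IsCountablyGenerated] (μ : Measure α) [IsFiniteMeasure μ] :
    Tendsto (fun x => μ.real (Iic x)) atTop (𝓝 (μ.real univ)) :=
  (ENNReal.tendsto_toReal (measure_ne_top μ univ)).comp (tendsto_measure_Iic_atTop μ)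

/-- the set of plausible models of
`H(X) = sup_m (1/m)·Σ_{k=1}^m X(k)` admits no center of symmetry: there is no
probability measure `ν` with (a) `E_ν ≤ H` and (b) `2E_ν − E_{P_n} ≤ H` for all `n`. -/
theorem no_center_of_symmetry :
    ¬ ∃ ν : Measure ℕ+, IsProbabilityMeasure ν ∧
      (∀ X : ℕ+ → ℝ, (∃ c : ℝ, ∀ n, |X n| ≤ c) →
        (∫ n, X n ∂ν) ≤ ⨆ m : ℕ+, (1 / (m : ℝ)) * ∑ k ∈ Finset.Icc 1 m, X k) ∧
      (∀ n : ℕ+, ∀ X : ℕ+ → ℝ, (∃ c : ℝ, ∀ k, |X k| ≤ c) →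
        2 * (∫ k, X k ∂ν) - (1 / (n : ℝ)) * ∑ k ∈ Finset.Icc 1 n, X k ≤
          ⨆ m : ℕ+, (1 / (m : ℝ)) * ∑ k ∈ Finset.Icc 1 m, X k) := by
  rintro ⟨ν, hν, -, hb⟩
  have hhalf : ∀ N : ℕ+, 2 * ν.real (Iic N) ≤ 1 := fun N => by
    set X : ℕ+ → ℝ := (Iic N).indicator 1
    have hX01 : ∀ k, 0 ≤ X k ∧ X k ≤ 1 := fun k => by
      by_cases hk : k ∈ Iic N <;> simp [X, hk]
    have hXbdd : ∃ c : ℝ, ∀ k, |X k| ≤ c :=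
      ⟨1, fun k => abs_le.2 ⟨by linarith [(hX01 k).1], (hX01 k).2⟩⟩
    have hXtail : ∀ k, N < k → X k = 0 := fun k hk =>
      indicator_of_notMem (s := Iic N) (not_le.2 hk) _
    have hbN : ∀ n, 2 * ν.real (Iic N) - cesaroAverage X n ≤ 1 := fun n => by
      have h := (hb n X hXbdd).trans (iSup_cesaroAverage_le fun k => (hX01 k).2)
      rwa [integral_indicator_one MeasurableSpace.measurableSet_top] at h
    simpa using le_of_tendsto'
      (tendsto_const_nhds.sub (tendsto_cesaroAverage_zero_of_eq_zero_of_lt hXtail)) hbN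
  have h2 := le_of_tendsto' ((tendsto_measureReal_Iic_atTop ν).const_mul 2) hhalf
  norm_num [probReal_univ] at h2
end

section
/- Let L be a real vector space with a preorder ≤, let M ⊆ L be a linear subspace, and let C ⊆ L be nonempty with M ⊆ C, X + m ∈ C for all X ∈ C and m ∈ M, C exhaustive (for every X ∈ L there exists X₀ ∈ C with X₀ ≥ X), and X + m ≤ Y + m for all m ∈ M and all X, Y ∈ L with X ≤ Y. Let H : C → ℝ satisfy (P1') H(X + m) = H(X) + H(m) for all X ∈ C, m ∈ M; (P2') H(0) = 0 and H(X) ≥ 0 for all X ∈ C with X ≥ 0; (P3') inf{H(X₀) : X₀ ∈ C, X₀ ≥ X} > −∞ for all X ∈ L. Define R_Max(X) := inf{H(X₀) : X₀ ∈ C, X₀ ≥ X} for X ∈ L. Then: (a) R_Max : L → ℝ is a risk measure, i.e. R_Max(X + m) = R_Max(X) + R_Max(m) for all X ∈ L, m ∈ M, R_Max(0) = 0, and R_Max is monotone; (b) R_Max(X) ≤ H(X) for all X ∈ C and R_Max(m) = H(m) for all m ∈ M; (c) D_Min(X) := H(X) − R_Max(X) defines a deviation measure on C, i.e. D_Min(X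 + m) = D_Min(X) for all X ∈ C, m ∈ M, D_Min(0) = 0, and D_Min ≥ 0, so that H = R_Max + D_Min on C; (d) if R : L → ℝ is any risk measure (R(X + m) = R(X) + R(m) for X ∈ L, m ∈ M; R(0) = 0; R monotone) and D : C → ℝ any deviation measure (D(X + m) = D(X) for X ∈ C, m ∈ M; D(0) = 0; D ≥ 0) with H(X) = R(X) + D(X) for all X ∈ C, then R(X) ≤ R_Max(X) for all X ∈ L and D(X) ≥ D_Min(X) for all X ∈ C. -/
/-!
`R_Max(X)` is the cheapest price `H X₀` of a claim `X₀ ∈ C` dominating `X`. Translating by a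
liquid claim `m` translates the dominating claims and, by (P1'), their prices by `H m`; this gives
cash additivity, and together with (P2') it gives `R_Max = H` on `M`. Any monotone `R` lying below
`H` on `C` is below every `H X₀` with `X₀ ≥ X`, hence below their infimum `R_Max(X)`.
-/

/-- The maximal risk measure `R_Max(X) = inf {H X₀ | X₀ ∈ C, X₀ ≥ X}` on a
preordered vector space. -/
noncomputable def RMaxL {L : Type*} [Preorder L] (C : Set L) (H : L → ℝ) (X : L) : ℝ :=
  sInf {y : ℝ | ∃ X₀ ∈ C, X ≤ X₀ ∧ H X₀ = y}

section Preorder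

variable {L : Type*} [Preorder L] {C : Set L} {H : L → ℝ} {X X₀ : L} {a : ℝ}

theorem RMaxL_le (hbdd : BddBelow {y : ℝ | ∃ X₀ ∈ C, X ≤ X₀ ∧ H X₀ = y}) (hX₀ : X₀ ∈ C)
    (hle : X ≤ X₀) : RMaxL C H X ≤ H X₀ :=
  csInf_le hbdd ⟨X₀, hX₀, hle, rfl⟩

theorem le_RMaxL (hexh : ∃ X₀ ∈ C, X ≤ X₀) (h : ∀ X₀ ∈ C, X ≤ X₀ → a ≤ H X₀) :
    a ≤ RMaxL C H X := by
  obtain ⟨X₀, hX₀, hle⟩ := hexh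
  refine le_csInf ⟨H X₀, X₀, hX₀, hle, rfl⟩ ?_
  rintro _ ⟨Y₀, hY₀, hle', rfl⟩
  exact h Y₀ hY₀ hle'

theorem RMaxL_le_of_mem (hbdd : BddBelow {y : ℝ | ∃ X₀ ∈ C, X ≤ X₀ ∧ H X₀ = y}) (hX : X ∈ C) :
    RMaxL C H X ≤ H X :=
  RMaxL_le hbdd hX le_rfl

theorem RMaxL_mono (hexh : ∀ X : L, ∃ X₀ ∈ C, X ≤ X₀)
    (hbdd : ∀ X : L, BddBelow {y : ℝ | ∃ X₀ ∈ C, X ≤ X₀ ∧ H X₀ = y}) :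
    Monotone (RMaxL C H) := fun X Y hXY =>
  le_RMaxL (hexh Y) fun _ hX₀ hle => RMaxL_le (hbdd X) hX₀ (hXY.trans hle)

theorem le_RMaxL_of_monotone (hexh : ∀ X : L, ∃ X₀ ∈ C, X ≤ X₀) {R : L → ℝ} (hR : Monotone R)
    (hRH : ∀ X ∈ C, R X ≤ H X) (X : L) : R X ≤ RMaxL C H X :=
  le_RMaxL (hexh X) fun X₀ hX₀ hle => (hR hle).trans (hRH X₀ hX₀)

end Preorder

theorem map_zero_of_map_add {L : Type*} [AddCommGroup L] {M : AddSubgroup L} {C : Set L}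
    {H : L → ℝ} (h0 : (0 : L) ∈ C) (hP1 : ∀ X ∈ C, ∀ m ∈ M, H (X + m) = H X + H m) :
    H 0 = 0 := by
  have := hP1 0 h0 0 M.zero_mem
  rw [add_zero] at this
  linarith

section Translation

variable {L : Type*} [AddCommGroup L] [Preorder L] {M : AddSubgroup L} {C : Set L} {H : L → ℝ}

theorem RMaxL_add_le (hCadd : ∀ X ∈ C, ∀ m ∈ M, X + m ∈ C)
    (hexh : ∀ X : L, ∃ X₀ ∈ C, X ≤ X₀) (hord : ∀ m ∈ M, ∀ X Y : L, X ≤ Y → X + m ≤ Y + m)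
    (hP1 : ∀ X ∈ C, ∀ m ∈ M, H (X + m) = H X + H m)
    (hbdd : ∀ X : L, BddBelow {y : ℝ | ∃ X₀ ∈ C, X ≤ X₀ ∧ H X₀ = y})
    (X : L) {m : L} (hm : m ∈ M) : RMaxL C H (X + m) ≤ RMaxL C H X + H m := by
  rw [← sub_le_iff_le_add]
  refine le_RMaxL (hexh X) fun X₀ hX₀ hle => ?_
  have hshift := RMaxL_le (hbdd (X + m)) (hCadd X₀ hX₀ m hm) (hord m hm X X₀ hle)
  rw [hP1 X₀ hX₀ m hm] at hshift
  linarith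

theorem RMaxL_add (hMC : (M : Set L) ⊆ C) (hCadd : ∀ X ∈ C, ∀ m ∈ M, X + m ∈ C)
    (hexh : ∀ X : L, ∃ X₀ ∈ C, X ≤ X₀) (hord : ∀ m ∈ M, ∀ X Y : L, X ≤ Y → X + m ≤ Y + m)
    (hP1 : ∀ X ∈ C, ∀ m ∈ M, H (X + m) = H X + H m)
    (hbdd : ∀ X : L, BddBelow {y : ℝ | ∃ X₀ ∈ C, X ≤ X₀ ∧ H X₀ = y})
    (X : L) {m : L} (hm : m ∈ M) : RMaxL C H (X + m) = RMaxL C H X + H m := by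
  have hH0 : H 0 = 0 := map_zero_of_map_add (hMC M.zero_mem) hP1
  have hHneg : H (-m) = -H m := by
    have := hP1 m (hMC hm) (-m) (M.neg_mem hm)
    rw [add_neg_cancel, hH0] at this
    linarith
  have hback := RMaxL_add_le hCadd hexh hord hP1 hbdd (X + m) (M.neg_mem hm)
  rw [add_neg_cancel_right, hHneg] at hback
  linarith [RMaxL_add_le hCadd hexh hord hP1 hbdd X hm]

end Translation

theorem abstract_maximal_decomposition_general {L : Type*}
    [AddCommGroup L] [Module ℝ L] [Preorder L]
    (M : Submodule ℝ L) (C : Set L)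
    (hMC : (M : Set L) ⊆ C)
    (hCadd : ∀ X ∈ C, ∀ m ∈ M, X + m ∈ C)
    (hexh : ∀ X : L, ∃ X₀ ∈ C, X ≤ X₀)
    (hord : ∀ m ∈ M, ∀ X Y : L, X ≤ Y → X + m ≤ Y + m)
    (H : L → ℝ)
    (hP1 : ∀ X ∈ C, ∀ m ∈ M, H (X + m) = H X + H m)
    (hP2 : ∀ X ∈ C, 0 ≤ X → 0 ≤ H X)
    (hP3 : ∀ X : L, BddBelow {y : ℝ | ∃ X₀ ∈ C, X ≤ X₀ ∧ H X₀ = y}) :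
    -- (a) `R_Max` is a risk measure on `L`
    (∀ X : L, ∀ m ∈ M, RMaxL C H (X + m) = RMaxL C H X + RMaxL C H m) ∧
    RMaxL C H 0 = 0 ∧
    (∀ X Y : L, X ≤ Y → RMaxL C H X ≤ RMaxL C H Y) ∧
    -- (b) `R_Max ≤ H` on `C` and `R_Max = H` on `M`
    (∀ X ∈ C, RMaxL C H X ≤ H X) ∧
    (∀ m ∈ M, RMaxL C H m = H m) ∧
    -- (c) `D_Min := H − R_Max` is a deviation measure on `C`
    (∀ X ∈ C, ∀ m ∈ M, H (X + m) - RMaxL C H (X + m) = H X - RMaxL C H X) ∧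
    H 0 - RMaxL C H 0 = 0 ∧
    (∀ X ∈ C, 0 ≤ H X - RMaxL C H X) ∧
    (∀ X ∈ C, H X = RMaxL C H X + (H X - RMaxL C H X)) ∧
    -- (d) maximality/minimality among all decompositions
    (∀ R D : L → ℝ,
      ((∀ X : L, ∀ m ∈ M, R (X + m) = R X + R m) ∧ R 0 = 0 ∧
        (∀ X Y : L, X ≤ Y → R X ≤ R Y)) →
      ((∀ X ∈ C, ∀ m ∈ M, D (X + m) = D X) ∧ D 0 = 0 ∧ (∀ X ∈ C, 0 ≤ D X)) →
      (∀ X ∈ C, H X = R X + D X) →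
      (∀ X : L, R X ≤ RMaxL C H X) ∧ (∀ X ∈ C, H X - RMaxL C H X ≤ D X)) := by
  have hadd := RMaxL_add (M := M.toAddSubgroup) hMC hCadd hexh hord hP1 hP3
  have hle : ∀ X ∈ C, RMaxL C H X ≤ H X := fun X hX => RMaxL_le_of_mem (hP3 X) hX
  have hH0 : H 0 = 0 := map_zero_of_map_add (M := M.toAddSubgroup) (hMC M.zero_mem) hP1
  have hzero : RMaxL C H 0 = 0 :=
    le_antisymm (hH0 ▸ hle 0 (hMC M.zero_mem)) (le_RMaxL (hexh 0) hP2)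
  have hM : ∀ m ∈ M, RMaxL C H m = H m := fun m hm => by simpa [hzero] using hadd 0 hm
  refine ⟨fun X m hm => by rw [hadd X hm, hM m hm], hzero, fun _ _ => (RMaxL_mono hexh hP3 ·),
    hle, hM, fun X hX m hm => by rw [hP1 X hX m hm, hadd X hm]; ring,
    by rw [hH0, hzero, sub_zero], fun X hX => sub_nonneg.2 (hle X hX),
    fun _ _ => (add_sub_cancel _ _).symm, ?_⟩
  rintro R D ⟨-, -, hRmono⟩ ⟨-, -, hDnonneg⟩ hHRD
  have hRle : ∀ X, R X ≤ RMaxL C H X :=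
    le_RMaxL_of_monotone hexh hRmono fun X hX => by linarith [hHRD X hX, hDnonneg X hX]
  exact ⟨hRle, fun X hX => by linarith [hHRD X hX, hRle X]⟩

/-- decomposition of a premium principle into the maximal risk
measure and the minimal deviation measure on a preordered vector space `L`,
with liquid claims `M` and claims `C`. -/
theorem abstract_maximal_decomposition {L : Type*}
    [AddCommGroup L] [Module ℝ L] [Preorder L]
    (M : Submodule ℝ L) (C : Set L)
    (hMC : (M : Set L) ⊆ C)
    (hCadd : ∀ X ∈ C, ∀ m ∈ M, X + m ∈ C)
    (hexh : ∀ X : L, ∃ X₀ ∈ C, X ≤ X₀)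
    (hord : ∀ m ∈ M, ∀ X Y : L, X ≤ Y → X + m ≤ Y + m)
    (H : L → ℝ)
    (hP1 : ∀ X ∈ C, ∀ m ∈ M, H (X + m) = H X + H m)
    (hP20 : H 0 = 0) (hP2 : ∀ X ∈ C, 0 ≤ X → 0 ≤ H X)
    (hP3 : ∀ X : L, BddBelow {y : ℝ | ∃ X₀ ∈ C, X ≤ X₀ ∧ H X₀ = y}) :
    -- (a) `R_Max` is a risk measure on `L`
    (∀ X : L, ∀ m ∈ M, RMaxL C H (X + m) = RMaxL C H X + RMaxL C H m) ∧
    RMaxL C H 0 = 0 ∧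
    (∀ X Y : L, X ≤ Y → RMaxL C H X ≤ RMaxL C H Y) ∧
    -- (b) `R_Max ≤ H` on `C` and `R_Max = H` on `M`
    (∀ X ∈ C, RMaxL C H X ≤ H X) ∧
    (∀ m ∈ M, RMaxL C H m = H m) ∧
    -- (c) `D_Min := H − R_Max` is a deviation measure on `C`
    (∀ X ∈ C, ∀ m ∈ M, H (X + m) - RMaxL C H (X + m) = H X - RMaxL C H X) ∧
    H 0 - RMaxL C H 0 = 0 ∧
    (∀ X ∈ C, 0 ≤ H X - RMaxL C H X) ∧
    (∀ X ∈ C, H X = RMaxL C H X + (H X - RMaxL C H X)) ∧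
    -- (d) maximality/minimality among all decompositions
    (∀ R D : L → ℝ,
      ((∀ X : L, ∀ m ∈ M, R (X + m) = R X + R m) ∧ R 0 = 0 ∧
        (∀ X Y : L, X ≤ Y → R X ≤ R Y)) →
      ((∀ X ∈ C, ∀ m ∈ M, D (X + m) = D X) ∧ D 0 = 0 ∧ (∀ X ∈ C, 0 ≤ D X)) →
      (∀ X ∈ C, H X = R X + D X) →
      (∀ X : L, R X ≤ RMaxL C H X) ∧ (∀ X ∈ C, H X - RMaxL C H X ≤ D X)) :=
  abstract_maximal_decomposition_general M C hMC hCadd hexh hord H hP1 hP2 hP3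
end
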